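/- Let ℒ := ΘL + LᵀΘ for a strongly connected weighted directed graph. Then ker(ℒ) = span{𝟏_N}; i.e., ℒx = 0 if and only if x is a scalar multiple of the all-ones vector. -/

import Mathlib

/-!
Write `L = diag(A𝟏) - A`. The balance `θᵀL = 0` says `∑ᵢ θᵢ Aᵢⱼ = θⱼ ∑ₖ Aⱼₖ`, hence
`∑ θᵢ Aᵢⱼ xᵢ² = ∑ θᵢ Aᵢⱼ xⱼ²`, and so `xᵀℒx = 2 xᵀΘLx = ∑ᵢⱼ θᵢ Aᵢⱼ (xᵢ - xⱼ)²`.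
If `ℒx = 0` this sum of nonnegative terms vanishes, so `xᵢ = xⱼ` along every edge, and strong
connectivity makes `x` constant. Conversely `ℒ𝟏 = Θ(L𝟏) + Lᵀθ = 0`.
-/

open Matrix

def IsLaplacianOfStronglyConnectedDigraph {N : ℕ} (L : Matrix (Fin N) (Fin N) ℝ) : Prop :=
  ∃ Adj : Matrix (Fin N) (Fin N) ℝ,
    (∀ i j, 0 ≤ Adj i j) ∧ (∀ i, Adj i i = 0) ∧
    (∀ i j : Fin N, i ≠ j → Relation.TransGen (fun a b => Adj b a ≠ 0) i j) ∧
    L = Matrix.diagonal (fun i => ∑ j, Adj i j) - Adj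

namespace Matrix

variable {ι R : Type*} [Fintype ι]

theorem dotProduct_add_transpose_mulVec [CommRing R] (M : Matrix ι ι R) (x : ι → R) :
    x ⬝ᵥ ((M + Mᵀ) *ᵥ x) = 2 * (x ⬝ᵥ (M *ᵥ x)) := by
  rw [add_mulVec, dotProduct_add, mulVec_transpose, dotProduct_comm x (vecMul x M),
    ← dotProduct_mulVec]
  ring

variable [DecidableEq ι]

def laplacian [AddCommGroup R] (A : Matrix ι ι R) : Matrix ι ι R :=
  diagonal (fun i => ∑ j, A i j) - A

section CommRing

variable [CommRing R] (A : Matrix ι ι R)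

theorem laplacian_mulVec_apply (x : ι → R) (i : ι) :
    (laplacian A *ᵥ x) i = ∑ j, A i j * (x i - x j) := by
  rw [laplacian, sub_mulVec, Pi.sub_apply, mulVec_diagonal]
  simp [mulVec, dotProduct, Finset.sum_mul, mul_sub]

theorem laplacian_mulVec_const (c : R) : laplacian A *ᵥ (fun _ => c) = 0 := by
  ext i
  simp [laplacian_mulVec_apply]

theorem vecMul_laplacian_apply (θ : ι → R) (j : ι) :
    vecMul θ (laplacian A) j = ∑ i, (θ j * A j i - θ i * A i j) := by
  rw [laplacian, vecMul_sub, Pi.sub_apply, vecMul_diagonal]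
  simp [vecMul, dotProduct, Finset.mul_sum]

theorem two_mul_dotProduct_diagonal_mul_laplacian_mulVec {θ : ι → R}
    (hθ : vecMul θ (laplacian A) = 0) (x : ι → R) :
    2 * (x ⬝ᵥ ((diagonal θ * laplacian A) *ᵥ x)) =
      ∑ i, ∑ j, θ i * A i j * (x i - x j) ^ 2 := by
  have hflux : ∑ i, ∑ j, θ i * A i j * x i ^ 2 = ∑ i, ∑ j, θ i * A i j * x j ^ 2 := by
    have := congrArg (· ⬝ᵥ fun j => x j ^ 2) hθ
    simp only [dotProduct, vecMul_laplacian_apply, Finset.sum_mul, sub_mul,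
      Finset.sum_sub_distrib, Pi.zero_apply, zero_mul, Finset.sum_const_zero] at this
    rw [Finset.sum_comm (f := fun j i => θ i * A i j * x j ^ 2)] at this
    linear_combination this
  calc 2 * (x ⬝ᵥ ((diagonal θ * laplacian A) *ᵥ x))
      = ∑ i, ∑ j, (θ i * A i j * (x i - x j) ^ 2 + θ i * A i j * (x i ^ 2 - x j ^ 2)) := by
        rw [← mulVec_mulVec]
        simp only [dotProduct, mulVec_diagonal, laplacian_mulVec_apply, Finset.mul_sum]
        exact Finset.sum_congr rfl fun i _ => Finset.sum_congr rfl fun j _ => by ring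
    _ = ∑ i, ∑ j, θ i * A i j * (x i - x j) ^ 2 := by
        simp only [Finset.sum_add_distrib, mul_sub, Finset.sum_sub_distrib, hflux, sub_self,
          add_zero]

theorem symmetrized_mulVec_const {L : Matrix ι ι R} {θ : ι → R} (hL : L *ᵥ (fun _ => 1) = 0)
    (hθ : vecMul θ L = 0) (c : R) :
    (diagonal θ * L + Lᵀ * diagonal θ) *ᵥ (fun _ => c) = 0 := by
  have hconst : (fun _ : ι => c) = c • fun _ => 1 := by ext; simp
  have hdiag : diagonal θ *ᵥ (fun _ => 1) = θ := by ext; simp [mulVec_diagonal]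
  rw [add_mulVec, ← mulVec_mulVec, ← mulVec_mulVec, hconst, mulVec_smul, hL, smul_zero,
    mulVec_zero, zero_add, mulVec_smul, hdiag, mulVec_smul, mulVec_transpose, hθ, smul_zero]

end CommRing

theorem eq_of_ne_zero_of_symmetrized_laplacian_mulVec_eq_zero [Field R] [LinearOrder R]
    [IsStrictOrderedRing R] {A : Matrix ι ι R} {θ : ι → R} (hA : ∀ i j, 0 ≤ A i j)
    (hθpos : ∀ i, 0 < θ i) (hθ : vecMul θ (laplacian A) = 0) {x : ι → R}
    (hx : (diagonal θ * laplacian A + (laplacian A)ᵀ * diagonal θ) *ᵥ x = 0) {i j : ι}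
    (hij : A i j ≠ 0) : x i = x j := by
  have hnonneg : ∀ i j, 0 ≤ θ i * A i j * (x i - x j) ^ 2 := fun i j =>
    mul_nonneg (mul_nonneg (hθpos i).le (hA i j)) (sq_nonneg _)
  have hsum : ∑ i, ∑ j, θ i * A i j * (x i - x j) ^ 2 = 0 := by
    rw [← two_mul_dotProduct_diagonal_mul_laplacian_mulVec A hθ,
      ← dotProduct_add_transpose_mulVec, transpose_mul, diagonal_transpose, hx, dotProduct_zero]
  have hterm : θ i * A i j * (x i - x j) ^ 2 = 0 := by
    have hrow := congrFun ((Fintype.sum_eq_zero_iff_of_nonneg fun i =>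
      Fintype.sum_nonneg (hnonneg i)).mp hsum) i
    exact congrFun ((Fintype.sum_eq_zero_iff_of_nonneg (hnonneg i)).mp hrow) j
  have := (mul_eq_zero.mp hterm).resolve_left (mul_ne_zero (hθpos i).ne' hij)
  exact sub_eq_zero.mp (pow_eq_zero_iff two_ne_zero |>.mp this)

end Matrix

theorem Function.exists_eq_const_of_forall_eq {ι α : Type*} [Nonempty α] {x : ι → α}
    (h : ∀ i j, x i = x j) : ∃ c, x = fun _ => c := by
  rcases isEmpty_or_nonempty ι with _ | ⟨⟨i⟩⟩
  · exact ⟨Classical.arbitrary α, funext isEmptyElim⟩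
  · exact ⟨x i, funext fun j => h j i⟩

theorem stmt_2_general {N : ℕ} (L : Matrix (Fin N) (Fin N) ℝ)
    (hL : IsLaplacianOfStronglyConnectedDigraph L)
    (θ : Fin N → ℝ) (hθpos : ∀ i, 0 < θ i) (hθL : Matrix.vecMul θ L = 0) :
    ∀ x : Fin N → ℝ,
      (Matrix.diagonal θ * L + Lᵀ * Matrix.diagonal θ).mulVec x = 0 ↔
        ∃ c : ℝ, x = fun _ => c := by
  obtain ⟨A, hA, -, hconn, rfl⟩ := hL
  change vecMul θ (laplacian A) = 0 at hθL
  intro x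
  constructor
  · intro hx
    have hedge : ∀ a b, A b a ≠ 0 → x a = x b := fun a b hab =>
      (eq_of_ne_zero_of_symmetrized_laplacian_mulVec_eq_zero hA hθpos hθL hx hab).symm
    refine Function.exists_eq_const_of_forall_eq fun i j => ?_
    rcases eq_or_ne i j with rfl | hij
    · rfl
    · simpa [Relation.transGen_eq_self] using (hconn i j hij).lift x hedge
  · rintro ⟨c, rfl⟩
    exact symmetrized_mulVec_const (laplacian_mulVec_const A 1) hθL c

/-- `ker(ℒ) = span{𝟏_N}`: `ℒ x = 0` iff `x` is a scalar multiple of the all-ones vector. -/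
theorem stmt_2 {N : ℕ} (L : Matrix (Fin N) (Fin N) ℝ)
    (hL : IsLaplacianOfStronglyConnectedDigraph L)
    (θ : Fin N → ℝ) (hθpos : ∀ i, 0 < θ i) (hθL : Matrix.vecMul θ L = 0)
    (hθsum : ∑ i, θ i = (N : ℝ)) :
    ∀ x : Fin N → ℝ,
      (Matrix.diagonal θ * L + Lᵀ * Matrix.diagonal θ).mulVec x = 0 ↔
        ∃ c : ℝ, x = fun _ => c :=
  stmt_2_general L hL θ hθpos hθL
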